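/- Let {q_k}_{k≥0} be a sequence of nonnegative reals with q_0 > 0. For M ∈ ℕ and any integer q with 1 ≤ q < 2^M, the Walsh–Nörlund mean of index 2^M + q of the function f = D_{2^{M+1}} − D_{2^M} satisfies, for every x ∈ [0,1): t_{2^M+q}(f)(x) = ( w_{2^M}(x) / Q_{2^M+q} ) Σ_{k=1}^{q} q_{q−k} D_k(x). -/

import Mathlib

open MeasureTheory Filter
open scoped ENNReal NNReal

noncomputable section

namespace Walsh

/-- Lebesgue measure restricted to `[0,1)`. -/
def μI : Measure ℝ := volume.restrict (Set.Ico (0:ℝ) 1)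

/-- The `k`-th binary digit `x_k` of `x ∈ [0,1)`, using the expansion terminating
in `0`'s for dyadic rationals. -/
def digit (k : ℕ) (x : ℝ) : ℕ := (⌊x * 2 ^ (k + 1)⌋).toNat % 2

/-- `ε_k(n)`, the `k`-th binary coefficient of `n`. -/
def eps (k n : ℕ) : ℕ := if n.testBit k then 1 else 0

/-- Walsh–Paley function `w_n(x) = (-1)^{Σ_k ε_k(n) x_k}`. -/
def walsh (n : ℕ) (x : ℝ) : ℝ :=
  (-1 : ℝ) ^ (∑ k ∈ Finset.range (n + 1), eps k n * digit k x)

/-- Walsh–Dirichlet kernel `D_n = Σ_{k=0}^{n-1} w_k`. -/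
def D (n : ℕ) (x : ℝ) : ℝ := ∑ k ∈ Finset.range n, walsh k x

/-- Walsh–Fejér kernel `K_n = (1/n) Σ_{k=1}^{n} D_k`. -/
def K (n : ℕ) (x : ℝ) : ℝ := (1 / (n : ℝ)) * ∑ k ∈ Finset.Icc 1 n, D k x

/-- Partial sums `S_M(f) = Σ_{i=0}^{M-1} f̂(i) w_i` of the Walsh–Fourier series. -/
def S (f : ℝ → ℝ) (M : ℕ) (x : ℝ) : ℝ :=
  ∑ i ∈ Finset.range M, (∫ t in Set.Ico (0:ℝ) 1, f t * walsh i t) * walsh i x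

/-- `Q_n = q_0 + ⋯ + q_{n-1}`. -/
def Q (q : ℕ → ℝ) (n : ℕ) : ℝ := ∑ k ∈ Finset.range n, q k

/-- Walsh–Nörlund mean `t_n(f) = (1/Q_n) Σ_{k=1}^n q_{n-k} S_k(f)`. -/
def t (q : ℕ → ℝ) (n : ℕ) (f : ℝ → ℝ) (x : ℝ) : ℝ :=
  (1 / Q q n) * ∑ k ∈ Finset.Icc 1 n, q (n - k) * S f k x

/-- Walsh–Nörlund kernel `F_n = (1/Q_n) Σ_{k=1}^n q_{n-k} D_k`. -/
def F (q : ℕ → ℝ) (n : ℕ) (x : ℝ) : ℝ :=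
  (1 / Q q n) * ∑ k ∈ Finset.Icc 1 n, q (n - k) * D k x

/-- Maximal Nörlund operator `t^*(f) = sup_{n ≥ 1} |t_n(f)|`, valued in `ℝ≥0∞`. -/
def tstar (q : ℕ → ℝ) (f : ℝ → ℝ) (x : ℝ) : ℝ≥0∞ :=
  ⨆ n ∈ Set.Ici 1, ENNReal.ofReal |t q n f x|

/-- `L^p[0,1)` quasinorm (`0 < p ≤ 1`) of a real function, valued in `ℝ≥0∞`. -/
def LpNorm (p : ℝ) (g : ℝ → ℝ) : ℝ≥0∞ :=
  (∫⁻ x in Set.Ico (0:ℝ) 1, ENNReal.ofReal |g x| ^ p) ^ (1 / p)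

/-- `L^p[0,1)` quasinorm of an `ℝ≥0∞`-valued function. -/
def LpNormE (p : ℝ) (g : ℝ → ℝ≥0∞) : ℝ≥0∞ :=
  (∫⁻ x in Set.Ico (0:ℝ) 1, g x ^ p) ^ (1 / p)

/-- `L^∞[0,1)` norm. -/
def LinfNorm (g : ℝ → ℝ) : ℝ≥0∞ := essSup (fun x => ENNReal.ofReal |g x|) μI

/-- Dyadic maximal function `E^*(f) = sup_m |S_{2^m}(f)|`, valued in `ℝ≥0∞`. -/
def maxS (f : ℝ → ℝ) (x : ℝ) : ℝ≥0∞ := ⨆ m : ℕ, ENNReal.ofReal |S f (2 ^ m) x|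

/-- Dyadic Hardy space quasinorm `‖f‖_{H_p} = ‖sup_m |S_{2^m} f|‖_{L^p}`. -/
def HpNorm (p : ℝ) (f : ℝ → ℝ) : ℝ≥0∞ :=
  (∫⁻ x in Set.Ico (0:ℝ) 1, maxS f x ^ p) ^ (1 / p)

/-- Dyadic (logical) addition `x ∔ y = Σ_k |x_k - y_k| 2^{-(k+1)}`. -/
def dadd (x y : ℝ) : ℝ :=
  ∑' k : ℕ, |(digit k x : ℝ) - (digit k y : ℝ)| * (2 : ℝ)⁻¹ ^ (k + 1)

/-- The dyadic interval `I_N = [0, 2^{-N})`. -/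
def IN (N : ℕ) : Set ℝ := Set.Ico (0:ℝ) (1 / 2 ^ N)

/-- `F_{n,1} = (w_n/Q_n) Σ_{j=1}^r Q_{n^{(j-1)}} w_{2^{n_j}} D_{2^{n_j}}`,
the first part of the Nörlund kernel decomposition. The sum over the binary
decomposition `n = 2^{n_1} + ⋯ + 2^{n_r}` is re-indexed over the set bit
positions `i` of `n`; if `i = n_j` then `n^{(j-1)} = n mod 2^{i+1}`. -/
def F1 (q : ℕ → ℝ) (n : ℕ) (x : ℝ) : ℝ :=
  (walsh n x / Q q n) *
    ∑ i ∈ Finset.range (n + 1),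
      if n.testBit i then Q q (n % 2 ^ (i + 1)) * walsh (2 ^ i) x * D (2 ^ i) x else 0

end Walsh

/-!
By orthogonality of the Walsh system, the Walsh coefficients of `D_{2^{M+1}} - D_{2^M}` are the
indicator of `[2^M, 2^{M+1})`, so `S_k f = w_{2^M} D_{k - 2^M}` for `k ≤ 2^{M+1}` (using
`w_{2^M + u} = w_{2^M} w_u`); this vanishes for `k ≤ 2^M`, and the Nörlund mean collapses to the
stated sum after the shift `k ↦ k - 2^M`.

Orthogonality reduces, via `w_a w_b = w_{a ^^^ b}`, to `∫ w_n = 0` for `n ≠ 0`. For `n < 2^K`,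
`w_n` is constant on the dyadic intervals of rank `K`, and as a function of the interval index it
is a nontrivial character of `(ℤ/2)^K` under `^^^`, so its values sum to zero.
-/

open Finset

namespace Walsh

lemma eps_eq_zero_of_lt {k n : ℕ} (h : n < 2 ^ k) : eps k n = 0 := by
  simp [eps, Nat.testBit_lt_two_pow h]

lemma sum_range_eps_mul_of_le (g : ℕ → ℕ) {n R R' : ℕ} (hn : n < 2 ^ R) (hR : R ≤ R') :
    ∑ k ∈ range R', eps k n * g k = ∑ k ∈ range R, eps k n * g k := by
  refine (sum_subset (range_subset_range.2 hR) fun k _ hk => ?_).symm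
  have hRk : R ≤ k := by simpa using hk
  rw [eps_eq_zero_of_lt (hn.trans_le (Nat.pow_le_pow_right two_pos hRk)), zero_mul]

lemma walsh_eq_pow_sum_range {n R : ℕ} (hn : n < 2 ^ R) (x : ℝ) :
    walsh n x = (-1) ^ ∑ k ∈ range R, eps k n * digit k x := by
  have hn' : n < 2 ^ (n + 1) := Nat.lt_two_pow_self.trans (Nat.pow_lt_pow_succ one_lt_two)
  rw [walsh, ← sum_range_eps_mul_of_le _ hn' (le_max_right R (n + 1)),
    sum_range_eps_mul_of_le _ hn (le_max_left R (n + 1))]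

lemma walsh_zero (x : ℝ) : walsh 0 x = 1 := by
  simp [walsh, eps]

lemma eps_xor_modEq (a b k : ℕ) : eps k (a ^^^ b) ≡ eps k a + eps k b [MOD 2] := by
  unfold eps
  rw [Nat.testBit_xor]
  cases a.testBit k <;> cases b.testBit k <;> rfl

lemma neg_one_pow_sum_eps_xor (s : Finset ℕ) (σ g : ℕ → ℕ) (a b : ℕ) :
    (-1 : ℝ) ^ (∑ k ∈ s, eps (σ k) a * g k) * (-1) ^ (∑ k ∈ s, eps (σ k) b * g k)
      = (-1) ^ (∑ k ∈ s, eps (σ k) (a ^^^ b) * g k) := by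
  have h : ∑ k ∈ s, eps (σ k) (a ^^^ b) * g k
      ≡ ∑ k ∈ s, eps (σ k) a * g k + ∑ k ∈ s, eps (σ k) b * g k [MOD 2] := by
    rw [← sum_add_distrib]
    exact Nat.ModEq.sum fun k _ => by rw [← add_mul]; exact (eps_xor_modEq a b _).mul_right _
  rw [← pow_add, neg_one_pow_eq_pow_mod_two, ← h, ← neg_one_pow_eq_pow_mod_two]

lemma walsh_mul_walsh (a b : ℕ) (x : ℝ) : walsh a x * walsh b x = walsh (a ^^^ b) x := by
  have ha : a < 2 ^ (a + b) :=
    Nat.lt_two_pow_self.trans_le (Nat.pow_le_pow_right two_pos (by omega))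
  have hb : b < 2 ^ (a + b) :=
    Nat.lt_two_pow_self.trans_le (Nat.pow_le_pow_right two_pos (by omega))
  rw [walsh_eq_pow_sum_range ha, walsh_eq_pow_sum_range hb,
    walsh_eq_pow_sum_range (Nat.xor_lt_two_pow ha hb)]
  exact neg_one_pow_sum_eps_xor _ id _ a b

lemma two_pow_add_eq_xor {M u : ℕ} (hu : u < 2 ^ M) : 2 ^ M + u = 2 ^ M ^^^ u := by
  rw [← mul_one (2 ^ M), Nat.two_pow_add_eq_or_of_lt hu, mul_one]
  refine Nat.eq_of_testBit_eq fun i => ?_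
  rw [Nat.testBit_or, Nat.testBit_xor, Nat.testBit_two_pow]
  rcases eq_or_ne M i with rfl | h
  · simp [Nat.testBit_lt_two_pow hu]
  · simp [h]

lemma walsh_two_pow_add {M u : ℕ} (hu : u < 2 ^ M) (x : ℝ) :
    walsh (2 ^ M + u) x = walsh (2 ^ M) x * walsh u x := by
  rw [walsh_mul_walsh, two_pow_add_eq_xor hu]

lemma digit_eq_eps_floor {k K : ℕ} (hk : k < K) (x : ℝ) :
    digit k x = eps (K - 1 - k) ⌊x * 2 ^ K⌋₊ := by
  have hscale : x * 2 ^ (k + 1) = x * 2 ^ K / ((2 ^ (K - 1 - k) : ℕ) : ℝ) := by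
    have hK : (2 : ℝ) ^ K = 2 ^ (K - 1 - k) * 2 ^ (k + 1) := by
      rw [← pow_add]
      congr 1
      omega
    rw [hK]
    push_cast
    field_simp
  rw [digit, Int.floor_toNat, hscale, Nat.floor_div_natCast, eps, Nat.testBit_eq_decide_div_mod_eq]
  rcases Nat.mod_two_eq_zero_or_one (⌊x * 2 ^ K⌋₊ / 2 ^ (K - 1 - k)) with h | h <;> simp [h]

/-- The value of `walsh n` on the dyadic interval `[j / 2^K, (j + 1) / 2^K)`, for `n < 2^K`. -/
def walshDyadic (K n j : ℕ) : ℝ := (-1) ^ ∑ k ∈ range K, eps k n * eps (K - 1 - k) j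

lemma walsh_eq_walshDyadic {K n : ℕ} (hn : n < 2 ^ K) (x : ℝ) :
    walsh n x = walshDyadic K n ⌊x * 2 ^ K⌋₊ := by
  rw [walsh_eq_pow_sum_range hn, walshDyadic]
  exact congrArg _ (sum_congr rfl fun k hk => by rw [digit_eq_eps_floor (mem_range.1 hk)])

lemma walshDyadic_xor (K n i j : ℕ) :
    walshDyadic K n (i ^^^ j) = walshDyadic K n i * walshDyadic K n j := by
  simp only [walshDyadic, mul_comm (eps _ n)]
  exact (neg_one_pow_sum_eps_xor _ (K - 1 - ·) _ i j).symm

lemma walshDyadic_two_pow {K n k : ℕ} (hk : k < K) (hnk : n.testBit k) :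
    walshDyadic K n (2 ^ (K - 1 - k)) = -1 := by
  have hsum : ∑ i ∈ range K, eps i n * eps (K - 1 - i) (2 ^ (K - 1 - k)) = 1 := by
    rw [sum_eq_single_of_mem k (mem_range.2 hk)]
    · simp [eps, hnk]
    · intro i hi hik
      have : K - 1 - k ≠ K - 1 - i := by have := mem_range.1 hi; omega
      simp [eps, this]
  rw [walshDyadic, hsum, pow_one]

/-- `j ↦ j ^^^ 2^(K-1-k)`, for a set bit `k` of `n`, is an involution flipping every sign. -/
lemma sum_walshDyadic_eq_zero {K n : ℕ} (hn0 : n ≠ 0) (hn : n < 2 ^ K) :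
    ∑ j ∈ range (2 ^ K), walshDyadic K n j = 0 := by
  obtain ⟨k, hnk⟩ := Nat.exists_testBit_of_ne_zero hn0
  have hk : k < K := by
    by_contra! hKk
    rw [Nat.testBit_lt_two_pow (hn.trans_le (Nat.pow_le_pow_right two_pos hKk))] at hnk
    exact Bool.false_ne_true hnk
  set c := 2 ^ (K - 1 - k)
  have hc : c < 2 ^ K := Nat.pow_lt_pow_right one_lt_two (by omega)
  refine sum_involution (fun j _ => j ^^^ c) (fun j _ => ?_) (fun j _ _ h => ?_)
    (fun j hj => mem_range.2 (Nat.xor_lt_two_pow (mem_range.1 hj) hc))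
    (fun j _ => xor_cancel_right j c)
  · rw [walshDyadic_xor, walshDyadic_two_pow hk hnk]
    ring
  · have hc0 : c = 0 := by simpa using congrArg (j ^^^ ·) h
    exact absurd hc0 (by positivity)

lemma measurable_walsh (n : ℕ) : Measurable (walsh n) := by
  have hdigit (k : ℕ) : Measurable fun x : ℝ => digit k x :=
    (Measurable.of_discrete (f := fun z : ℤ => z.toNat % 2)).comp
      (Int.measurable_floor.comp (measurable_id.mul_const _))
  exact (Measurable.of_discrete (f := fun e : ℕ => (-1 : ℝ) ^ e)).comp
    (Finset.measurable_sum _ fun k _ => (hdigit k).const_mul _)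

lemma integrableOn_walsh (n : ℕ) {s : Set ℝ} (hs : volume s ≠ ⊤) : IntegrableOn (walsh n) s := by
  refine Measure.integrableOn_of_bounded hs (measurable_walsh n).aestronglyMeasurable
    (M := 1) (Eventually.of_forall fun x => ?_)
  rw [Real.norm_eq_abs, walsh, abs_pow, abs_neg, abs_one, one_pow]

lemma setIntegral_Ico_zero_one_eq_sum {g : ℝ → ℝ} {N : ℕ} (hN : N ≠ 0)
    (hg : ∀ a b : ℝ, IntervalIntegrable g volume a b) :
    ∫ t in Set.Ico 0 1, g t = ∑ j ∈ range N, ∫ t in Set.Ico ((j : ℝ) / N) ((j + 1) / N), g t := by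
  have hIco {a b : ℝ} (hab : a ≤ b) : ∫ t in Set.Ico a b, g t = ∫ t in a..b, g t := by
    rw [intervalIntegral.integral_of_le hab, setIntegral_congr_set Ico_ae_eq_Ioc]
  calc ∫ t in Set.Ico 0 1, g t = ∫ t in ((0 : ℕ) : ℝ) / N..((N : ℕ) : ℝ) / N, g t := by
        rw [hIco zero_le_one]
        simp [hN]
    _ = ∑ j ∈ range N, ∫ t in (j : ℝ) / N..((j + 1 : ℕ) : ℝ) / N, g t :=
        (intervalIntegral.sum_integral_adjacent_intervals (a := fun j : ℕ => (j : ℝ) / N)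
          fun _ _ => hg _ _).symm
    _ = _ := sum_congr rfl fun j _ => by
        push_cast
        rw [hIco (by gcongr; linarith)]

lemma floor_mul_eq_of_mem_Ico {N j : ℕ} (hN : N ≠ 0) {t : ℝ}
    (ht : t ∈ Set.Ico ((j : ℝ) / N) ((j + 1) / N)) : ⌊t * N⌋₊ = j := by
  have hN' : (0 : ℝ) < N := by positivity
  rw [Nat.floor_eq_iff (mul_nonneg ((div_nonneg j.cast_nonneg hN'.le).trans ht.1) hN'.le)]
  exact ⟨(div_le_iff₀ hN').1 ht.1, (lt_div_iff₀ hN').1 ht.2⟩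

lemma integral_walsh (n : ℕ) : ∫ t in Set.Ico 0 1, walsh n t = if n = 0 then 1 else 0 := by
  split_ifs with hn0
  · simp [hn0, walsh_zero]
  have hn : n < 2 ^ n := Nat.lt_two_pow_self
  have hN : 2 ^ n ≠ 0 := by positivity
  have hpiece (j : ℕ) : ∫ t in Set.Ico ((j : ℝ) / (2 ^ n : ℕ)) ((j + 1) / (2 ^ n : ℕ)), walsh n t
      = walshDyadic n n j / 2 ^ n := by
    rw [setIntegral_congr_fun measurableSet_Ico fun t ht => by
      rw [walsh_eq_walshDyadic hn, ← Nat.cast_ofNat, ← Nat.cast_pow, floor_mul_eq_of_mem_Ico hN ht]]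
    have hlen : ((j : ℝ) + 1) / 2 ^ n - j / 2 ^ n = 1 / 2 ^ n := by ring
    simp only [setIntegral_const, Real.volume_real_Ico, Nat.cast_pow, Nat.cast_ofNat, hlen,
      smul_eq_mul]
    rw [max_eq_left (by positivity)]
    ring
  rw [setIntegral_Ico_zero_one_eq_sum hN fun a b => (integrableOn_walsh n (by simp)).intervalIntegrable]
  simp_rw [hpiece]
  rw [← sum_div, sum_walshDyadic_eq_zero hn0 hn, zero_div]

lemma integral_sum_walsh_mul_walsh (s : Finset ℕ) (i : ℕ) :
    ∫ t in Set.Ico 0 1, (∑ l ∈ s, walsh l t) * walsh i t = if i ∈ s then 1 else 0 := by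
  simp_rw [sum_mul, walsh_mul_walsh]
  rw [integral_finsetSum _ fun l _ => integrableOn_walsh _ (by simp)]
  simp_rw [integral_walsh, xor_eq_zero_iff]
  exact sum_ite_eq' s i fun _ => 1

lemma S_sum_walsh (s : Finset ℕ) (k : ℕ) (x : ℝ) :
    S (fun y => ∑ l ∈ s, walsh l y) k x = ∑ i ∈ range k with i ∈ s, walsh i x := by
  simp_rw [S, integral_sum_walsh_mul_walsh, ite_mul, one_mul, zero_mul]
  rw [sum_filter]

lemma S_dirichlet_sub {M k : ℕ} (hk : k ≤ 2 ^ (M + 1)) (x : ℝ) :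
    S (fun y => D (2 ^ (M + 1)) y - D (2 ^ M) y) k x = walsh (2 ^ M) x * D (k - 2 ^ M) x := by
  have hpow : 2 ^ (M + 1) = 2 ^ M + 2 ^ M := by ring
  have hf : (fun y => D (2 ^ (M + 1)) y - D (2 ^ M) y)
      = fun y => ∑ i ∈ Ico (2 ^ M) (2 ^ (M + 1)), walsh i y :=
    funext fun y => (sum_Ico_eq_sub _ (by omega)).symm
  have hrange : {i ∈ range k | i ∈ Ico (2 ^ M) (2 ^ (M + 1))} = Ico (2 ^ M) k := by
    ext i
    simp only [mem_filter, mem_range, mem_Ico]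
    omega
  rw [hf, S_sum_walsh, hrange, sum_Ico_eq_sum_range, D, mul_sum]
  exact sum_congr rfl fun u hu => walsh_two_pow_add (by rw [mem_range] at hu; omega) x

end Walsh

lemma Finset.sum_Icc_mul_sub_shift {R : Type*} [NonUnitalNonAssocSemiring R] (c g : ℕ → R)
    (hg : g 0 = 0) (N m : ℕ) :
    ∑ k ∈ Icc 1 (N + m), c (N + m - k) * g (k - N) = ∑ k ∈ Icc 1 m, c (m - k) * g k := by
  simp only [← Ico_add_one_right_eq_Icc, sum_Ico_eq_sum_range, Nat.add_sub_cancel, sum_range_add]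
  rw [sum_eq_zero fun k hk => by
    rw [show 1 + k - N = 0 by rw [mem_range] at hk; omega, hg, mul_zero], zero_add]
  refine sum_congr rfl fun k _ => ?_
  congr 2 <;> omega

theorem norlund_mean_of_dirichlet_difference_general
    (q : ℕ → ℝ)
    (M : ℕ) (m : ℕ) (hm2 : m < 2 ^ M)
    (x : ℝ) :
    Walsh.t q (2 ^ M + m) (fun y => Walsh.D (2 ^ (M + 1)) y - Walsh.D (2 ^ M) y) x
      = (Walsh.walsh (2 ^ M) x / Walsh.Q q (2 ^ M + m)) *
          ∑ k ∈ Finset.Icc 1 m, q (m - k) * Walsh.D k x := by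
  have hS : ∀ k ∈ Icc 1 (2 ^ M + m),
      q (2 ^ M + m - k) * Walsh.S (fun y => Walsh.D (2 ^ (M + 1)) y - Walsh.D (2 ^ M) y) k x
        = Walsh.walsh (2 ^ M) x * (q (2 ^ M + m - k) * Walsh.D (k - 2 ^ M) x) := by
    intro k hk
    rw [Walsh.S_dirichlet_sub (by rw [mem_Icc] at hk; rw [pow_succ]; omega)]
    ring
  rw [Walsh.t, sum_congr rfl hS, ← mul_sum,
    sum_Icc_mul_sub_shift q (fun k => Walsh.D k x) (by simp [Walsh.D])]
  ring

/-- explicit formula for the Nörlund mean of index `2^M + m`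
(`1 ≤ m < 2^M`) of `f = D_{2^{M+1}} - D_{2^M}`. -/
theorem norlund_mean_of_dirichlet_difference
    (q : ℕ → ℝ) (hq_nonneg : ∀ k, 0 ≤ q k) (hq0 : 0 < q 0)
    (M : ℕ) (m : ℕ) (hm1 : 1 ≤ m) (hm2 : m < 2 ^ M)
    (x : ℝ) (hx : x ∈ Set.Ico (0:ℝ) 1) :
    Walsh.t q (2 ^ M + m) (fun y => Walsh.D (2 ^ (M + 1)) y - Walsh.D (2 ^ M) y) x
      = (Walsh.walsh (2 ^ M) x / Walsh.Q q (2 ^ M + m)) *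
          ∑ k ∈ Finset.Icc 1 m, q (m - k) * Walsh.D k x :=
  norlund_mean_of_dirichlet_difference_general q M m hm2 x
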